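/- arXiv:2006.08263 — 4 statements merged into one kernel-verified Lean document; each statement's English description precedes it below -/
import Mathlib

section
/- Let Q, Q' be homogeneous quadratic polynomials in ℂ[x₁,...,xₙ] and let r ∈ ℕ. Then there exists a linear space of linear forms V with dim(V) ≤ 8r such that for all α, β ∈ ℂ with rank_s(αQ + βQ') ≤ r, one has MS(αQ + βQ') ⊆ V. -/
open MvPolynomial

noncomputable section

/-- A linear form: a homogeneous polynomial of degree 1. -/
def IsLinearForm {n : ℕ} (l : MvPolynomial (Fin n) ℂ) : Prop :=
  l.IsHomogeneous 1

/-- A representation of `Q` as a sum of `r` products of pairs of linear forms. -/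
def IsRep {n : ℕ} (Q : MvPolynomial (Fin n) ℂ) (r : ℕ)
    (a : ℕ → MvPolynomial (Fin n) ℂ) : Prop :=
  (∀ i < 2 * r, IsLinearForm (a i)) ∧
    Q = ∑ k ∈ Finset.range r, a (2 * k) * a (2 * k + 1)

/-- `rankS Q` is the minimal `r` such that `Q` is a sum of `r` products of linear forms. -/
noncomputable def rankS {n : ℕ} (Q : MvPolynomial (Fin n) ℂ) : ℕ :=
  sInf {r | ∃ a, IsRep Q r a}

/-- The minimal space of a quadratic: the span of the linear forms in a minimal
representation (independent of the chosen minimal representation). -/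
noncomputable def MS {n : ℕ} (Q : MvPolynomial (Fin n) ℂ) :
    Submodule ℂ (MvPolynomial (Fin n) ℂ) :=
  ⨆ (a : ℕ → MvPolynomial (Fin n) ℂ) (_ : IsRep Q (rankS Q) a),
    Submodule.span ℂ (a '' Set.Iio (2 * rankS Q))

/-- A linear space whose elements are all linear forms. -/
def IsLinFormSpace {n : ℕ} (V : Submodule ℂ (MvPolynomial (Fin n) ℂ)) : Prop :=
  ∀ v ∈ V, MvPolynomial.IsHomogeneous v 1

/-- `ℂ[V]₂`: homogeneous quadratic polynomials depending only on the linear forms in `V`. -/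
noncomputable def CV2 {n : ℕ} (V : Submodule ℂ (MvPolynomial (Fin n) ℂ)) :
    Submodule ℂ (MvPolynomial (Fin n) ℂ) :=
  Subalgebra.toSubmodule (Algebra.adjoin ℂ (V : Set (MvPolynomial (Fin n) ℂ))) ⊓
    MvPolynomial.homogeneousSubmodule (Fin n) ℂ 2

/-- The EK-quadratics condition for a triple of finite sets of polynomials. -/
def EKQuadCond {n : ℕ} (T : Fin 3 → Finset (MvPolynomial (Fin n) ℂ)) : Prop :=
  (∀ i, ∀ P ∈ T i, ∀ j, ∀ Q ∈ T j, P ≠ Q → ∀ c : ℂ, Q ≠ c • P) ∧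
  (∀ i, ∀ P ∈ T i,
      (Irreducible P ∧ P.IsHomogeneous 2) ∨ ∃ l, IsLinearForm l ∧ P = l * l) ∧
  (∀ i j k : Fin 3, i ≠ j → j ≠ k → i ≠ k →
      ∀ Q₁ ∈ T i, ∀ Q₂ ∈ T j,
        (∏ Q ∈ T k, Q) ∈ (Ideal.span {Q₁, Q₂}).radical)

/-! For a representation `P = ∑ₖ a₂ₖ a₂ₖ₊₁` by linear forms, every partial derivative of `P`
lies in the span of the forms `aⱼ`, so the span `derivSpan P` of the partial derivatives is a
space of linear forms of dimension at most `2 * rankS P`. Conversely, every form of a minimal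
representation lies in `derivSpan P`: otherwise some functional `l` kills all `∂ᵢ P` but not some
`aⱼ`; then `∑ₖ l(a₂ₖ₊₁) a₂ₖ + l(a₂ₖ) a₂ₖ₊₁ = 0` and `∑ₖ l(a₂ₖ) l(a₂ₖ₊₁) = 0`, so the projection
`x ↦ x - l x • L` with `L` proportional to `aⱼ` and `l L = 1` keeps the sum equal to `P` while
killing the product containing `aⱼ`, contradicting minimality. Hence `MS P ≤ derivSpan P`.

Since `derivSpan (u • P + v • R) ≤ derivSpan P ⊔ derivSpan R`, and the pairs `(α, β)` of rank at
most `r` lie in the span of two of them, `(α₁, β₁)` and `(α₂, β₂)`, the space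
`derivSpan (α₁ • Q + β₁ • Q') ⊔ derivSpan (α₂ • Q + β₂ • Q')` of dimension at most `4r` works.
-/

theorem exists_mem_mem_subset_span_pair {K E : Type*} [DivisionRing K] [AddCommGroup E] [Module K E]
    [FiniteDimensional K E] (hE : Module.finrank K E ≤ 2) {S : Set E} (h0 : (0 : E) ∈ S) :
    ∃ p ∈ S, ∃ q ∈ S, S ⊆ Submodule.span K {p, q} := by
  classical
  obtain ⟨b, hbS, hspan, hli⟩ := exists_linearIndependent K S
  lift b to Finset E using hli.setFinite
  suffices ∃ p ∈ S, ∃ q ∈ S, (b : Set E) ⊆ {p, q} by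
    obtain ⟨p, hp, q, hq, hb⟩ := this
    exact ⟨p, hp, q, hq, Submodule.subset_span.trans (hspan ▸ Submodule.span_mono hb)⟩
  have hcard : b.card ≤ 2 := hli.finset_card_le_finrank.trans hE
  interval_cases h : b.card
  · obtain rfl := Finset.card_eq_zero.mp h
    exact ⟨0, h0, 0, h0, by simp⟩
  · obtain ⟨p, rfl⟩ := Finset.card_eq_one.mp h
    exact ⟨p, hbS (by simp), p, hbS (by simp), by simp⟩
  · obtain ⟨p, q, -, rfl⟩ := Finset.card_eq_two.mp h
    exact ⟨p, hbS (by simp), q, hbS (by simp), by simp⟩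

theorem Finset.sum_sub_smul_mul_sub_smul {ι R A : Type*} [CommRing R] [CommRing A]
    [Algebra R A] (s : Finset ι) (f g : ι → A) (u v : ι → R) (L : A)
    (h₁ : ∑ k ∈ s, (v k • f k + u k • g k) = 0) (h₂ : ∑ k ∈ s, u k * v k = 0) :
    ∑ k ∈ s, (f k - u k • L) * (g k - v k • L) = ∑ k ∈ s, f k * g k := by
  have hexpand : ∀ k, (f k - u k • L) * (g k - v k • L)
      = f k * g k - L * (v k • f k + u k • g k) + (u k * v k) • (L * L) := by
    intro k
    simp only [Algebra.smul_def, map_mul]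
    ring
  simp only [hexpand, Finset.sum_add_distrib, Finset.sum_sub_distrib, ← Finset.mul_sum,
    ← Finset.sum_smul, h₁, h₂, mul_zero, zero_smul, sub_zero, add_zero]

section

variable {n : ℕ}

theorem IsLinearForm.pderiv_eq_C {l : MvPolynomial (Fin n) ℂ} (hl : IsLinearForm l) (i : Fin n) :
    pderiv i l = C ((pderiv i l).coeff 0) :=
  totalDegree_eq_zero_iff_eq_C.mp <|
    (totalDegree_zero_iff_isHomogeneous _).mpr (IsHomogeneous.pderiv (n := 1) hl)

theorem IsLinearForm.eq_zero_of_pderiv_eq_zero {l : MvPolynomial (Fin n) ℂ}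
    (hl : IsLinearForm l) (h : ∀ i, pderiv i l = 0) : l = 0 := by
  simpa [h] using hl.sum_X_mul_pderiv.symm

theorem IsLinearForm.sub_smul {l L : MvPolynomial (Fin n) ℂ} (hl : IsLinearForm l)
    (hL : IsLinearForm L) (c : ℂ) : IsLinearForm (l - c • L) :=
  Submodule.sub_mem (homogeneousSubmodule (Fin n) ℂ 1) hl (Submodule.smul_mem _ c hL)

theorem pderiv_sum_mul {s : ℕ} {f g : Fin s → MvPolynomial (Fin n) ℂ}
    (hf : ∀ k, IsLinearForm (f k)) (hg : ∀ k, IsLinearForm (g k)) (i : Fin n) :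
    pderiv i (∑ k, f k * g k)
      = ∑ k, ((pderiv i (f k)).coeff 0 • g k + (pderiv i (g k)).coeff 0 • f k) := by
  simp only [map_sum, Derivation.leibniz, smul_eq_mul]
  refine Finset.sum_congr rfl fun k _ => ?_
  rw [(hf k).pderiv_eq_C i, (hg k).pderiv_eq_C i, coeff_C, coeff_C]
  simp only [if_true, smul_eq_C_mul]
  ring

def derivSpan (P : MvPolynomial (Fin n) ℂ) : Submodule ℂ (MvPolynomial (Fin n) ℂ) :=
  Submodule.span ℂ (Set.range fun i => pderiv i P)

instance (P : MvPolynomial (Fin n) ℂ) : FiniteDimensional ℂ (derivSpan P) :=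
  FiniteDimensional.span_of_finite ℂ (Set.finite_range _)

theorem derivSpan_le_iff {P : MvPolynomial (Fin n) ℂ} {V : Submodule ℂ (MvPolynomial (Fin n) ℂ)} :
    derivSpan P ≤ V ↔ ∀ i, pderiv i P ∈ V := by
  rw [derivSpan, Submodule.span_le, Set.range_subset_iff]
  rfl

theorem derivSpan_smul_add_smul_le (a b : ℂ) (P R : MvPolynomial (Fin n) ℂ) :
    derivSpan (a • P + b • R) ≤ derivSpan P ⊔ derivSpan R := by
  refine derivSpan_le_iff.mpr fun i => ?_
  rw [map_add, Derivation.map_smul, Derivation.map_smul]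
  exact Submodule.add_mem _
    (Submodule.smul_mem _ a (Submodule.mem_sup_left (Submodule.subset_span ⟨i, rfl⟩)))
    (Submodule.smul_mem _ b (Submodule.mem_sup_right (Submodule.subset_span ⟨i, rfl⟩)))

theorem derivSpan_sum_mul_le {s : ℕ} {f g : Fin s → MvPolynomial (Fin n) ℂ}
    (hf : ∀ k, IsLinearForm (f k)) (hg : ∀ k, IsLinearForm (g k)) :
    derivSpan (∑ k, f k * g k) ≤ Submodule.span ℂ (Set.range (Sum.elim f g)) := by
  refine derivSpan_le_iff.mpr fun i => ?_
  rw [pderiv_sum_mul hf hg]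
  refine Submodule.sum_mem _ fun k _ => Submodule.add_mem _ ?_ ?_
  · exact Submodule.smul_mem _ _ (Submodule.subset_span ⟨Sum.inr k, rfl⟩)
  · exact Submodule.smul_mem _ _ (Submodule.subset_span ⟨Sum.inl k, rfl⟩)

theorem sum_dual_smul_add_dual_smul_eq_zero {s : ℕ} {f g : Fin s → MvPolynomial (Fin n) ℂ}
    (hf : ∀ k, IsLinearForm (f k)) (hg : ∀ k, IsLinearForm (g k))
    (l : Module.Dual ℂ (MvPolynomial (Fin n) ℂ)) (hl : ∀ i, l (pderiv i (∑ k, f k * g k)) = 0) :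
    ∑ k, (l (g k) • f k + l (f k) • g k) = 0 := by
  refine IsLinearForm.eq_zero_of_pderiv_eq_zero ?_ fun i => ?_
  · exact Submodule.sum_mem (homogeneousSubmodule (Fin n) ℂ 1) fun k _ =>
      Submodule.add_mem _ (Submodule.smul_mem _ _ (hf k)) (Submodule.smul_mem _ _ (hg k))
  · have h := hl i
    rw [pderiv_sum_mul hf hg] at h
    simp only [map_sum, map_add, map_smul, smul_eq_mul] at h
    simp only [map_sum, map_add, Derivation.map_smul]
    rw [← C_0, ← h, map_sum]
    refine Finset.sum_congr rfl fun k _ => ?_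
    rw [(hf k).pderiv_eq_C i, (hg k).pderiv_eq_C i]
    simp only [coeff_C, if_true, smul_eq_C_mul, map_add, map_mul]
    ring

theorem rankS_sum_mul_le {s : ℕ} {f g : Fin s → MvPolynomial (Fin n) ℂ}
    (hf : ∀ k, IsLinearForm (f k)) (hg : ∀ k, IsLinearForm (g k)) :
    rankS (∑ k, f k * g k) ≤ s := by
  refine Nat.sInf_le ⟨fun j => if h : j / 2 < s then
    (if j % 2 = 0 then f ⟨j / 2, h⟩ else g ⟨j / 2, h⟩) else 0, fun j hj => ?_, ?_⟩
  · have h : j / 2 < s := by omega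
    simp only [h, dif_pos]
    split_ifs
    exacts [hf _, hg _]
  · rw [Finset.sum_range]
    refine Finset.sum_congr rfl fun k _ => ?_
    have h0 : 2 * (k : ℕ) / 2 = k := by omega
    have h1 : (2 * (k : ℕ) + 1) / 2 = k := by omega
    simp [h0, h1]

theorem rankS_le_of_dual_pderiv_eq_zero {s : ℕ} {f g : Fin (s + 1) → MvPolynomial (Fin n) ℂ}
    (hf : ∀ k, IsLinearForm (f k)) (hg : ∀ k, IsLinearForm (g k))
    (l : Module.Dual ℂ (MvPolynomial (Fin n) ℂ)) (hl : ∀ i, l (pderiv i (∑ k, f k * g k)) = 0)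
    (k₀ : Fin (s + 1)) (hk₀ : l (g k₀) ≠ 0) :
    rankS (∑ k, f k * g k) ≤ s := by
  have h₁ := sum_dual_smul_add_dual_smul_eq_zero hf hg l hl
  have h₂ : ∑ k, l (f k) * l (g k) = 0 := by
    have h := congrArg l h₁
    simp only [map_sum, map_add, map_smul, smul_eq_mul, map_zero] at h
    have htwice : (2 : ℂ) * ∑ k, l (f k) * l (g k) = 0 := by
      rw [Finset.mul_sum, ← h]
      exact Finset.sum_congr rfl fun k _ => by ring
    exact (mul_eq_zero.mp htwice).resolve_left two_ne_zero
  set L := (l (g k₀))⁻¹ • g k₀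
  have hL : IsLinearForm L := Submodule.smul_mem (homogeneousSubmodule (Fin n) ℂ 1) _ (hg k₀)
  have hk₀L : g k₀ - l (g k₀) • L = 0 := by simp [L, smul_smul, hk₀]
  rw [← Finset.sum_sub_smul_mul_sub_smul _ f g (fun k => l (f k)) (fun k => l (g k)) L h₁ h₂,
    Fin.sum_univ_succAbove _ k₀, hk₀L, mul_zero, zero_add]
  exact rankS_sum_mul_le (fun k => (hf _).sub_smul hL _) (fun k => (hg _).sub_smul hL _)

section IsRep

variable {P : MvPolynomial (Fin n) ℂ} {s : ℕ} {a : ℕ → MvPolynomial (Fin n) ℂ}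

theorem IsRep.eq_sum_fin (h : IsRep P s a) : P = ∑ k : Fin s, a (2 * k) * a (2 * k + 1) :=
  h.2.trans (Finset.sum_range _)

theorem IsRep.isLinearForm_left (h : IsRep P s a) (k : Fin s) : IsLinearForm (a (2 * k)) :=
  h.1 _ (by have := k.isLt; omega)

theorem IsRep.isLinearForm_right (h : IsRep P s a) (k : Fin s) :
    IsLinearForm (a (2 * k + 1)) :=
  h.1 _ (by have := k.isLt; omega)

theorem IsRep.derivSpan_le (h : IsRep P s a) :
    derivSpan P ≤ Submodule.span ℂ
      (Set.range (Sum.elim (fun k : Fin s => a (2 * k)) (fun k : Fin s => a (2 * k + 1)))) := by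
  rw [h.eq_sum_fin]
  exact derivSpan_sum_mul_le h.isLinearForm_left h.isLinearForm_right

theorem IsRep.finrank_derivSpan_le (h : IsRep P s a) :
    Module.finrank ℂ (derivSpan P) ≤ 2 * s := by
  have := FiniteDimensional.span_of_finite ℂ
    (Set.finite_range (Sum.elim (fun k : Fin s => a (2 * k)) (fun k : Fin s => a (2 * k + 1))))
  refine (Submodule.finrank_mono h.derivSpan_le).trans ((finrank_range_le_card _).trans ?_)
  simp [two_mul]

theorem IsRep.derivSpan_le_homogeneousSubmodule (h : IsRep P s a) :
    derivSpan P ≤ homogeneousSubmodule (Fin n) ℂ 1 := by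
  refine h.derivSpan_le.trans (Submodule.span_le.mpr ?_)
  rintro _ ⟨k | k, rfl⟩
  exacts [h.isLinearForm_left k, h.isLinearForm_right k]

theorem IsRep.mem_derivSpan (h : IsRep P (rankS P) a) {j : ℕ} (hj : j < 2 * rankS P) :
    a j ∈ derivSpan P := by
  by_contra hj'
  obtain ⟨l, hlj, hl⟩ := Submodule.exists_dual_map_eq_bot_of_notMem hj' inferInstance
  have hlP : ∀ i, l (pderiv i P) = 0 := fun i => by
    simpa using (Submodule.eq_bot_iff _).mp hl _
      (Submodule.mem_map_of_mem (Submodule.subset_span ⟨i, rfl⟩))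
  obtain ⟨m, hm⟩ : ∃ m, rankS P = m + 1 := Nat.exists_eq_succ_of_ne_zero (by omega)
  rw [hm] at h hj
  have hf := h.isLinearForm_left
  have hg := h.isLinearForm_right
  have hP := h.eq_sum_fin
  have hP' : P = ∑ k : Fin (m + 1), a (2 * k + 1) * a (2 * k) :=
    hP.trans (Finset.sum_congr rfl fun _ _ => mul_comm _ _)
  obtain ⟨k, rfl | rfl⟩ := Nat.even_or_odd' j
  · have := rankS_le_of_dual_pderiv_eq_zero hg hf l (hP' ▸ hlP) ⟨k, by omega⟩ hlj
    rw [← hP', hm] at this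
    omega
  · have := rankS_le_of_dual_pderiv_eq_zero hf hg l (hP ▸ hlP) ⟨k, by omega⟩ hlj
    rw [← hP, hm] at this
    omega

theorem IsRep.span_le_derivSpan (h : IsRep P (rankS P) a) :
    Submodule.span ℂ (a '' Set.Iio (2 * rankS P)) ≤ derivSpan P :=
  Submodule.span_le.mpr fun _ ⟨_, hj, hx⟩ => hx ▸ h.mem_derivSpan hj

end IsRep

theorem isRep_zero (a : ℕ → MvPolynomial (Fin n) ℂ) : IsRep 0 0 a :=
  ⟨fun _ hi => absurd hi (Nat.not_lt_zero _), by simp⟩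

theorem rankS_zero : rankS (0 : MvPolynomial (Fin n) ℂ) = 0 :=
  Nat.le_zero.mp (Nat.sInf_le ⟨0, isRep_zero 0⟩)

theorem derivSpan_le_of_mem_span_pair (Q Q' : MvPolynomial (Fin n) ℂ) {α β : ℂ} {p q : ℂ × ℂ}
    (hx : (α, β) ∈ Submodule.span ℂ {p, q}) :
    derivSpan (α • Q + β • Q') ≤
      derivSpan (p.1 • Q + p.2 • Q') ⊔ derivSpan (q.1 • Q + q.2 • Q') := by
  obtain ⟨u, v, huv⟩ := Submodule.mem_span_pair.mp hx
  obtain ⟨rfl, rfl⟩ := Prod.ext_iff.mp huv.symm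
  have hcomb : (u • p + v • q).1 • Q + (u • p + v • q).2 • Q'
      = u • (p.1 • Q + p.2 • Q') + v • (q.1 • Q + q.2 • Q') := by
    simp only [Prod.fst_add, Prod.snd_add, Prod.smul_fst, Prod.smul_snd]
    module
  exact hcomb ▸ derivSpan_smul_add_smul_le _ _ _ _

end

theorem lin_rank_r_general (n : ℕ) (Q Q' : MvPolynomial (Fin n) ℂ) (r : ℕ) :
    ∃ V : Submodule ℂ (MvPolynomial (Fin n) ℂ), IsLinFormSpace V ∧
      FiniteDimensional ℂ V ∧ Module.finrank ℂ V ≤ 8 * r ∧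
      ∀ α β : ℂ, rankS (α • Q + β • Q') ≤ r → MS (α • Q + β • Q') ≤ V := by
  -- `rankS` is `0` on polynomials with no representation, hence the second conjunct.
  set S : Set (ℂ × ℂ) := {x | rankS (x.1 • Q + x.2 • Q') ≤ r ∧
    ∃ a, IsRep (x.1 • Q + x.2 • Q') (rankS (x.1 • Q + x.2 • Q')) a}
  have h0 : (0 : ℂ × ℂ) ∈ S := by
    simp only [S, Set.mem_ofPred_eq, Prod.fst_zero, Prod.snd_zero, zero_smul, add_zero, rankS_zero]
    exact ⟨Nat.zero_le r, 0, isRep_zero 0⟩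
  obtain ⟨p, ⟨hpr, a, ha⟩, q, ⟨hqr, b, hb⟩, hS⟩ :=
    exists_mem_mem_subset_span_pair (K := ℂ) (by rw [Module.finrank_prod, Module.finrank_self]) h0
  refine ⟨derivSpan (p.1 • Q + p.2 • Q') ⊔ derivSpan (q.1 • Q + q.2 • Q'),
    fun v hv => sup_le ha.derivSpan_le_homogeneousSubmodule hb.derivSpan_le_homogeneousSubmodule hv,
    inferInstance, ?_, fun α β hr => ?_⟩
  · calc _ ≤ _ := Submodule.finrank_add_le_finrank_add_finrank _ _
      _ ≤ 2 * rankS (p.1 • Q + p.2 • Q') + 2 * rankS (q.1 • Q + q.2 • Q') :=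
          add_le_add ha.finrank_derivSpan_le hb.finrank_derivSpan_le
      _ ≤ 8 * r := by omega
  · refine iSup₂_le fun c hc => hc.span_le_derivSpan.trans ?_
    have hαβ : (α, β) ∈ S := ⟨hr, c, hc⟩
    exact derivSpan_le_of_mem_span_pair Q Q' (hS hαβ)

/-- Claim `lin-rank-r`: for homogeneous quadratics `Q, Q'` and `r ∈ ℕ`,
there is a space `V` of linear forms of dimension at most `8r` containing the minimal space
of every linear combination `αQ + βQ'` of `rank_s` at most `r`. -/
theorem lin_rank_r (n : ℕ) (Q Q' : MvPolynomial (Fin n) ℂ)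
    (hQ : Q.IsHomogeneous 2) (hQ' : Q'.IsHomogeneous 2) (r : ℕ) :
    ∃ V : Submodule ℂ (MvPolynomial (Fin n) ℂ), IsLinFormSpace V ∧
      FiniteDimensional ℂ V ∧ Module.finrank ℂ V ≤ 8 * r ∧
      ∀ α β : ℂ, rankS (α • Q + β • Q') ≤ r → MS (α • Q + β • Q') ≤ V :=
  lin_rank_r_general n Q Q' r
end
end

section
/- Let P be a homogeneous irreducible quadratic polynomial in ℂ[x₁,...,xₙ], let a, b be linear forms, and let {T_i}_{i∈I} be a finite family of homogeneous quadratic polynomials such that ∏_{i∈I} T_i ∈ √⟨P, a·b⟩. Then either rank_s(P) = 2 and a ∈ MS(P), or there exists i ∈ I, a scalar α ∈ ℂ and a linear form c such that T_i = αP + a·c. -/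
open MvPolynomial

noncomputable section

/-! If `a ≠ 0`, substituting for one variable its solution of `a = 0` gives an algebra
endomorphism `κ` that kills `a` and is the identity modulo `a` (for `a = 0` take `κ = id`), so
`⟨P, a⟩ = κ⁻¹⟨κ P⟩` with `κ P` again a quadratic form. If `κ P` is irreducible, `⟨P, a⟩` is
prime, hence contains `√⟨P, a b⟩` and with it some `T i`; comparing degree-2 parts gives
`T i = α P + a c`. Otherwise `κ P = f g` for linear forms `f`, `g`, and `P - κ P = a c`, so
`P = f g + a c` is a representation of rank 2, which is minimal because `P` is irreducible. -/

namespace MvPolynomial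

section Graded

variable {σ R : Type*} [CommSemiring R]

attribute [local instance] gradedAlgebra in
theorem homogeneousComponent_add_mul_of_isHomogeneous_left {p q : MvPolynomial σ R} {k : ℕ}
    (hp : p.IsHomogeneous k) (i : ℕ) :
    homogeneousComponent (k + i) (p * q) = p * homogeneousComponent i q := by
  simp only [← decomposition.decompose'_apply]
  exact DirectSum.coe_decompose_mul_add_of_left_mem (homogeneousSubmodule σ R)
    ((mem_homogeneousSubmodule _ _).2 hp)

theorem IsHomogeneous.exists_eq_mul_of_dvd {a x : MvPolynomial σ R} {k d : ℕ}
    (hx : x.IsHomogeneous (k + d)) (ha : a.IsHomogeneous k) (h : a ∣ x) :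
    ∃ c, c.IsHomogeneous d ∧ x = a * c := by
  obtain ⟨w, rfl⟩ := h
  refine ⟨homogeneousComponent d w, homogeneousComponent_isHomogeneous d w, ?_⟩
  rw [← homogeneousComponent_add_mul_of_isHomogeneous_left ha, homogeneousComponent_eq_self hx]

theorem IsHomogeneous.not_isUnit [Nontrivial R] {p : MvPolynomial σ R} {k : ℕ}
    (hp : p.IsHomogeneous k) (hk : k ≠ 0) : ¬IsUnit p := by
  intro hu
  have h0 : constantCoeff p = 0 := hp.coeff_eq_zero (by simpa using hk.symm)
  exact not_isUnit_zero (h0 ▸ hu.map constantCoeff)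

end Graded

variable {σ K : Type*} [Field K]

theorem IsHomogeneous.exists_eq_smul_add_mul_of_mem_span_pair {P a T : MvPolynomial σ K}
    (hP : P.IsHomogeneous 2) (ha : a.IsHomogeneous 1) (hT : T.IsHomogeneous 2)
    (h : T ∈ Ideal.span {P, a}) :
    ∃ (α : K) (c : MvPolynomial σ K), c.IsHomogeneous 1 ∧ T = α • P + a * c := by
  obtain ⟨u, v, rfl⟩ := Ideal.mem_span_pair.1 h
  refine ⟨coeff 0 u, homogeneousComponent 1 v, homogeneousComponent_isHomogeneous 1 v, ?_⟩
  have hPu : homogeneousComponent 2 (P * u) = P * homogeneousComponent 0 u :=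
    homogeneousComponent_add_mul_of_isHomogeneous_left hP 0
  have hav : homogeneousComponent 2 (a * v) = a * homogeneousComponent 1 v :=
    homogeneousComponent_add_mul_of_isHomogeneous_left ha 1
  rw [← homogeneousComponent_eq_self hT, map_add, mul_comm u, mul_comm v, hPu, hav,
    homogeneousComponent_zero, smul_eq_C_mul, mul_comm P]

theorem isUnit_of_totalDegree_eq_zero {p : MvPolynomial σ K} (hp : p ≠ 0)
    (h : p.totalDegree = 0) : IsUnit p := by
  rw [totalDegree_eq_zero_iff_eq_C] at h
  rw [h] at hp ⊢
  exact (isUnit_iff_ne_zero.2 fun h0 => hp (by rw [h0, C_0])).map C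

theorem IsHomogeneous.exists_eq_mul_of_not_irreducible {Q : MvPolynomial σ K}
    (hQ : Q.IsHomogeneous 2) (hQ0 : Q ≠ 0) (hirr : ¬Irreducible Q) :
    ∃ f g, f.IsHomogeneous 1 ∧ g.IsHomogeneous 1 ∧ Q = f * g := by
  obtain ⟨f, g, rfl, hf, hg⟩ : ∃ f g, Q = f * g ∧ ¬IsUnit f ∧ ¬IsUnit g := by
    simpa [irreducible_iff, hQ.not_isUnit two_ne_zero] using hirr
  have hf0 : f ≠ 0 := left_ne_zero_of_mul hQ0
  have hg0 : g ≠ 0 := right_ne_zero_of_mul hQ0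
  have hdeg := hQ.totalDegree hQ0
  rw [totalDegree_mul_of_isDomain hf0 hg0] at hdeg
  have hdf : f.totalDegree = 1 := by
    have hf1 := mt (isUnit_of_totalDegree_eq_zero hf0) hf
    have hg1 := mt (isUnit_of_totalDegree_eq_zero hg0) hg
    omega
  have hg2 : homogeneousComponent 2 g = 0 := homogeneousComponent_eq_zero 2 g (by omega)
  have hf_split : f = C (coeff 0 f) + homogeneousComponent 1 f := by
    conv_lhs => rw [← sum_homogeneousComponent f, hdf]
    simp [Finset.sum_range_succ, homogeneousComponent_zero]
  refine ⟨homogeneousComponent 1 f, homogeneousComponent 1 g,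
    homogeneousComponent_isHomogeneous 1 f, homogeneousComponent_isHomogeneous 1 g, ?_⟩
  have hf1g : homogeneousComponent 2 (homogeneousComponent 1 f * g) =
      homogeneousComponent 1 f * homogeneousComponent 1 g :=
    homogeneousComponent_add_mul_of_isHomogeneous_left (homogeneousComponent_isHomogeneous 1 f) 1
  conv_lhs => rw [← homogeneousComponent_eq_self hQ, hf_split]
  rw [add_mul, map_add, homogeneousComponent_C_mul, hg2, mul_zero, zero_add, hf1g]

theorem exists_retraction_of_isHomogeneous_one [Fintype σ] {a : MvPolynomial σ K}
    (ha : a.IsHomogeneous 1) :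
    ∃ κ : MvPolynomial σ K →ₐ[K] MvPolynomial σ K, κ a = 0 ∧
      (∀ p, p - κ p ∈ Ideal.span {a}) ∧ ∀ p k, p.IsHomogeneous k → (κ p).IsHomogeneous k := by
  classical
  set d : σ → K := fun i => coeff 0 (pderiv i a)
  have ha_sum : a = ∑ i, C (d i) * X i := by
    conv_lhs => rw [← one_smul ℕ a, ← ha.sum_X_mul_pderiv]
    refine Finset.sum_congr rfl fun i _ => ?_
    have hconst := (totalDegree_zero_iff_isHomogeneous σ).2 (ha.pderiv (i := i))
    rw [mul_comm, totalDegree_eq_zero_iff_eq_C.1 hconst]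
  by_cases hd : ∀ i, d i = 0
  · refine ⟨AlgHom.id K _, ?_, fun p => by simp, fun p k hp => hp⟩
    rw [AlgHom.id_apply, ha_sum]
    simp [hd]
  push Not at hd
  obtain ⟨j, hj⟩ := hd
  -- `X j ↦ X j - a / d j`, where `d j` is the coefficient of `X j` in `a`
  set f : σ → MvPolynomial σ K := fun i => X i - C ((Pi.single j (d j)⁻¹ : σ → K) i) * a
  have hf : ∀ i, (f i).IsHomogeneous 1 := fun i => (isHomogeneous_X K i).sub (ha.C_mul _)
  refine ⟨aeval f, ?_, fun p => ?_, fun p k hp => by simpa using hp.aeval f hf⟩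
  · have hsum : ∑ i, d i * (Pi.single j (d j)⁻¹ : σ → K) i = 1 := by
      simp [Pi.single_apply, hj]
    calc aeval f a = ∑ i, C (d i) * f i := by
          conv_lhs => rw [ha_sum]
          simp
      _ = a - C (∑ i, d i * (Pi.single j (d j)⁻¹ : σ → K) i) * a := by
          simp only [f, mul_sub, Finset.sum_sub_distrib, ← ha_sum, map_sum, Finset.sum_mul,
            map_mul, mul_assoc]
      _ = 0 := by rw [hsum, map_one, one_mul, sub_self]
  · have hmk : (Ideal.Quotient.mkₐ K (Ideal.span {a})).comp (aeval f) =
        Ideal.Quotient.mkₐ K (Ideal.span {a}) := by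
      refine algHom_ext fun i => ?_
      simp [f, Ideal.Quotient.eq_zero_iff_mem.2 (Ideal.mem_span_singleton_self a)]
    exact Ideal.Quotient.eq.1 (AlgHom.congr_fun hmk p).symm

end MvPolynomial

theorem Ideal.span_pair_eq_comap_span_singleton {A F : Type*} [CommRing A] [FunLike F A A]
    [RingHomClass F A A] (κ : F) {a : A} (hκa : κ a = 0)
    (hκ : ∀ p, p - κ p ∈ Ideal.span {a}) (P : A) :
    Ideal.span {P, a} = Ideal.comap κ (Ideal.span {κ P}) := by
  refine le_antisymm (Ideal.span_le.2 ?_) fun g hg => ?_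
  · rintro x (rfl | rfl)
    · exact Ideal.mem_comap.2 (Ideal.mem_span_singleton_self _)
    · simp [hκa]
  · obtain ⟨h, hh⟩ := Ideal.mem_span_singleton'.1 (Ideal.mem_comap.1 hg)
    have hle : Ideal.span {a} ≤ Ideal.span {P, a} := Ideal.span_mono (by simp)
    have hg : g = (g - κ g) - h * (P - κ P) + h * P := by rw [← hh]; ring
    rw [hg]
    exact add_mem (sub_mem (hle (hκ g)) (Ideal.mul_mem_left _ _ (hle (hκ P))))
      (Ideal.mul_mem_left _ _ (Ideal.subset_span (by simp)))

theorem isPrime_span_pair_or_eq_mul_add_mul {σ K : Type*} [Fintype σ] [Field K]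
    {P a : MvPolynomial σ K} (hP : Irreducible P) (hP2 : P.IsHomogeneous 2)
    (ha : a.IsHomogeneous 1) :
    (Ideal.span {P, a}).IsPrime ∨
      ∃ f g c, f.IsHomogeneous 1 ∧ g.IsHomogeneous 1 ∧ c.IsHomogeneous 1 ∧ P = f * g + a * c := by
  obtain ⟨κ, hκa, hκ, hκhom⟩ := exists_retraction_of_isHomogeneous_one ha
  have hκP2 : (κ P).IsHomogeneous 2 := hκhom P 2 hP2
  by_cases hirr : Irreducible (κ P)
  · left
    have := (Ideal.span_singleton_prime hirr.ne_zero).2 hirr.prime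
    rw [Ideal.span_pair_eq_comap_span_singleton κ hκa hκ P]
    exact Ideal.comap_isPrime _ _
  right
  have hκP0 : κ P ≠ 0 := by
    intro h0
    obtain ⟨c, hc, hPc⟩ := hP2.exists_eq_mul_of_dvd (k := 1) (d := 1) ha
      (Ideal.mem_span_singleton.1 (by simpa [h0] using hκ P))
    rcases hP.isUnit_or_isUnit hPc with h | h
    exacts [ha.not_isUnit one_ne_zero h, hc.not_isUnit one_ne_zero h]
  obtain ⟨f, g, hf, hg, hfg⟩ := hκP2.exists_eq_mul_of_not_irreducible hκP0 hirr
  obtain ⟨c, hc, hPc⟩ := (hP2.sub hκP2).exists_eq_mul_of_dvd (k := 1) (d := 1) ha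
    (Ideal.mem_span_singleton.1 (hκ P))
  exact ⟨f, g, c, hf, hg, hc, by rw [← hfg, ← hPc]; ring⟩

section RankS

variable {n : ℕ}

theorem rankS_eq_two_of_isRep {P : MvPolynomial (Fin n) ℂ} (hP : Irreducible P)
    {u : ℕ → MvPolynomial (Fin n) ℂ} (hu : IsRep P 2 u) : rankS P = 2 := by
  obtain ⟨w, hw_lin, hw⟩ : rankS P ∈ {r | ∃ a, IsRep P r a} := Nat.sInf_mem ⟨2, u, hu⟩
  have hle : rankS P ≤ 2 := Nat.sInf_le ⟨u, hu⟩
  obtain h | h | h : rankS P = 0 ∨ rankS P = 1 ∨ rankS P = 2 := by omega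
  · rw [h, Finset.sum_range_zero] at hw
    exact absurd hw hP.ne_zero
  · rw [h, Finset.sum_range_one] at hw
    exfalso
    rcases hP.isUnit_or_isUnit hw with h0 | h1
    exacts [(hw_lin 0 (by omega)).not_isUnit one_ne_zero h0,
      (hw_lin 1 (by omega)).not_isUnit one_ne_zero h1]
  · exact h

theorem mem_MS_of_isRep {Q : MvPolynomial (Fin n) ℂ} {u : ℕ → MvPolynomial (Fin n) ℂ}
    (hu : IsRep Q (rankS Q) u) {i : ℕ} (hi : i < 2 * rankS Q) : u i ∈ MS Q :=
  Submodule.mem_iSup_of_mem u (Submodule.mem_iSup_of_mem hu (Submodule.subset_span ⟨i, hi, rfl⟩))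

theorem rankS_eq_two_and_mem_MS {P f g a c : MvPolynomial (Fin n) ℂ} (hP : Irreducible P)
    (hf : IsLinearForm f) (hg : IsLinearForm g) (ha : IsLinearForm a) (hc : IsLinearForm c)
    (h : P = f * g + a * c) : rankS P = 2 ∧ a ∈ MS P := by
  set u : ℕ → MvPolynomial (Fin n) ℂ := fun k => [f, g, a, c].getD k 0
  have hu : IsRep P 2 u := by
    refine ⟨fun i hi => ?_, by simp [u, Finset.sum_range_succ, h]⟩
    interval_cases i <;> assumption
  have h2 := rankS_eq_two_of_isRep hP hu
  exact ⟨h2, mem_MS_of_isRep (i := 2) (h2 ▸ hu) (by omega)⟩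

end RankS

theorem case_rk1_gen_general (n : ℕ) (P : MvPolynomial (Fin n) ℂ)
    (hP : Irreducible P) (hP2 : P.IsHomogeneous 2)
    (a b : MvPolynomial (Fin n) ℂ) (ha : IsLinearForm a)
    {ι : Type*} (s : Finset ι) (T : ι → MvPolynomial (Fin n) ℂ)
    (hT : ∀ i ∈ s, (T i).IsHomogeneous 2)
    (hprod : (∏ i ∈ s, T i) ∈ (Ideal.span {P, a * b}).radical) :
    (rankS P = 2 ∧ a ∈ MS P) ∨
      ∃ i ∈ s, ∃ (α : ℂ) (c : MvPolynomial (Fin n) ℂ),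
        IsLinearForm c ∧ T i = α • P + a * c := by
  rcases isPrime_span_pair_or_eq_mul_add_mul hP hP2 ha with hprime | ⟨f, g, c, hf, hg, hc, hPfgc⟩
  · right
    have hle : Ideal.span {P, a * b} ≤ Ideal.span {P, a} :=
      Ideal.span_le.2 <| Set.insert_subset_iff.2
        ⟨Ideal.subset_span (by simp),
          by simpa using Ideal.mul_mem_right b _ (Ideal.subset_span (by simp))⟩
    obtain ⟨i, hi, hTi⟩ := (Ideal.IsPrime.prod_mem_iff (hp := hprime)).1
      (hprime.radical ▸ Ideal.radical_mono hle hprod)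
    obtain ⟨α, c, hc, hTi_eq⟩ := hP2.exists_eq_smul_add_mul_of_mem_span_pair ha (hT i hi) hTi
    exact ⟨i, hi, α, c, hc, hTi_eq⟩
  · exact Or.inl (rankS_eq_two_and_mem_MS hP hf hg ha hc hPfgc)

/-- Claim `case-rk1-gen`: if `P` is an irreducible homogeneous quadratic,
`a, b` are linear forms and a finite product of homogeneous quadratics `T i` lies in
`√⟨P, a·b⟩`, then either `rank_s P = 2` and `a ∈ MS(P)`, or some `T i = αP + a·c` for a
scalar `α` and a linear form `c`. -/
theorem case_rk1_gen (n : ℕ) (P : MvPolynomial (Fin n) ℂ)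
    (hP : Irreducible P) (hP2 : P.IsHomogeneous 2)
    (a b : MvPolynomial (Fin n) ℂ) (ha : IsLinearForm a) (hb : IsLinearForm b)
    {ι : Type*} (s : Finset ι) (T : ι → MvPolynomial (Fin n) ℂ)
    (hT : ∀ i ∈ s, (T i).IsHomogeneous 2)
    (hprod : (∏ i ∈ s, T i) ∈ (Ideal.span {P, a * b}).radical) :
    (rankS P = 2 ∧ a ∈ MS P) ∨
      ∃ i ∈ s, ∃ (α : ℂ) (c : MvPolynomial (Fin n) ℂ),
        IsLinearForm c ∧ T i = α • P + a * c :=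
  case_rk1_gen_general n P hP hP2 a b ha s T hT hprod
end
end

section
/- Let z, a, b be linear forms in ℂ[x₁,...,xₙ] with a ∉ span{z} and b ∉ span{a, z}. Let ε_a, δ_a, ε_b, δ_b ∈ ℂ be such that ε_a·a + δ_a·z ≠ 0 and ε_b·b + δ_b·z ≠ 0, let λ, β ∈ ℂ \ {0}, and let c, d be linear forms such that λ·a·(ε_a·a + δ_a·z) + β·b·(ε_b·b + δ_b·z) + c·d ∈ span{z²}. Then there exist μ, η ∈ ℂ \ {0} and ε ∈ ℂ such that c = μ·a + η·b + ε·z or d = μ·a + η·b + ε·z. -/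
open MvPolynomial

noncomputable section

/-!
Evaluation identifies linear forms with linear functionals on `ℂⁿ`. On the common kernel of
`z, a, b` the polarization of `c * d` vanishes, and since `c * d` is not identically zero this
forces `c` and `d` to vanish there, so both lie in `span {a, b, z}`. Writing
`c = c_a a + c_b b + c_z z` and `d = d_a a + d_b b + d_z z` and evaluating at points dual to
`a, b, z` gives `c_a d_b + c_b d_a = 0`, while `λ ≠ 0` and `ε_a a + δ_a z ≠ 0` force
`(c_a, d_a) ≠ 0`, and likewise `(c_b, d_b) ≠ 0`. Together these leave only `c_a c_b ≠ 0` or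
`d_a d_b ≠ 0`.
-/

open Submodule

section Exchange

variable {K M : Type*} [Field K] [AddCommGroup M] [Module K M] {z a b : M}

theorem notMem_span_pair_exchange (haz : a ∉ span K {z}) (hbaz : b ∉ span K {a, z}) :
    a ∉ span K {b, z} :=
  fun h ↦ hbaz (mem_span_insert_exchange h haz)

theorem notMem_span_pair_of_ne_zero (hz : z ≠ 0) (haz : a ∉ span K {z})
    (hbaz : b ∉ span K {a, z}) : z ∉ span K {a, b} := by
  intro h
  by_cases hza : z ∈ span K {a}
  · obtain ⟨s, rfl⟩ := mem_span_singleton.1 hza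
    have hs : s ≠ 0 := by rintro rfl; exact hz (zero_smul K a)
    exact haz (mem_span_singleton.2 ⟨s⁻¹, inv_smul_smul₀ hs a⟩)
  · rw [Set.pair_comm] at h hbaz
    exact hbaz (mem_span_insert_exchange h hza)

end Exchange

theorem ne_zero_and_ne_zero_of_mul_add_mul_eq_zero {R : Type*} [Semiring R]
    [NoZeroDivisors R] {x y u v : R} (hxu : x ≠ 0 ∨ u ≠ 0) (hyv : y ≠ 0 ∨ v ≠ 0)
    (h : x * v + y * u = 0) : (x ≠ 0 ∧ y ≠ 0) ∨ (u ≠ 0 ∧ v ≠ 0) := by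
  by_cases hx : x = 0
  · have hu := hxu.resolve_left (not_not.2 hx)
    have hy : y = 0 := by simpa [hx, hu] using h
    exact Or.inr ⟨hu, hyv.resolve_left (not_not.2 hy)⟩
  · by_cases hy : y = 0
    · have hv := hyv.resolve_left (not_not.2 hy)
      exact absurd (by simpa [hy] using h) (mul_ne_zero hx hv)
    · exact Or.inl ⟨hx, hy⟩

theorem apply_eq_zero_and_apply_eq_zero_of_polar {α R : Type*} [Semiring R]
    [NoZeroDivisors R] {f g : α → R} {p : α} (hp : f p * g p = 0)
    (hpolar : ∀ q, f p * g q + f q * g p = 0) (hfg : ∃ q, f q * g q ≠ 0) :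
    f p = 0 ∧ g p = 0 := by
  obtain ⟨q, hq⟩ := hfg
  constructor
  · by_contra hf
    have hg : g p = 0 := (mul_eq_zero.1 hp).resolve_left hf
    have hgq : g q = 0 := by simpa [hf, hg] using hpolar q
    exact hq (by rw [hgq, mul_zero])
  · by_contra hg
    have hf : f p = 0 := (mul_eq_zero.1 hp).resolve_right hg
    have hfq : f q = 0 := by simpa [hf, hg] using hpolar q
    exact hq (by rw [hfq, zero_mul])

namespace Module.Dual

variable {K V : Type*} [Field K] [AddCommGroup V] [Module K V]

theorem exists_eq_smul_add_smul_add_smul {f g₁ g₂ g₃ : Module.Dual K V}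
    (h : ∀ p, g₁ p = 0 → g₂ p = 0 → g₃ p = 0 → f p = 0) :
    ∃ x y w : K, f = x • g₁ + y • g₂ + w • g₃ := by
  have hker : ⨅ i, LinearMap.ker (![g₁, g₂, g₃] i) ≤ LinearMap.ker f := fun p hp ↦ by
    simp only [mem_iInf, LinearMap.mem_ker, Fin.forall_fin_succ] at hp
    exact h p hp.1 hp.2.1 hp.2.2.1
  obtain ⟨c, hc⟩ := (mem_span_range_iff_exists_fun K).1 (mem_span_of_iInf_ker_le_ker hker)
  exact ⟨c 0, c 1, c 2, by simp [← hc, Fin.sum_univ_three]⟩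

theorem exists_apply_eq_one_of_notMem_span_pair {f g₁ g₂ : Module.Dual K V}
    (hf : f ∉ span K {g₁, g₂}) : ∃ p, g₁ p = 0 ∧ g₂ p = 0 ∧ f p = 1 := by
  have hker : ¬ ⨅ i, LinearMap.ker (![g₁, g₂] i) ≤ LinearMap.ker f := fun hker ↦ hf <| by
    simpa only [Matrix.range_cons_cons_empty] using mem_span_of_iInf_ker_le_ker hker
  obtain ⟨p, hp, hfp⟩ := SetLike.not_le_iff_exists.1 hker
  simp only [mem_iInf, LinearMap.mem_ker, Fin.forall_fin_two, Matrix.cons_val_zero,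
    Matrix.cons_val_one] at hp hfp
  exact ⟨(f p)⁻¹ • p, by simp [hp.1], by simp [hp.2], by simp [hfp]⟩

theorem exists_apply_eq_zero_quadratic_ne_zero {Z A B : Module.Dual K V} {εa δa lam : K}
    (hA : εa • A + δa • Z ≠ 0) (hlam : lam ≠ 0) {p₀ : V} (hZ₀ : Z p₀ = 0) (hB₀ : B p₀ = 0)
    (hA₀ : A p₀ = 1) (hZ : Z ≠ 0 → ∃ p, A p = 0 ∧ B p = 0 ∧ Z p = 1) (t : K) :
    ∃ p, B p = 0 ∧ t * Z p ^ 2 - lam * (A p * (εa * A p + δa * Z p)) ≠ 0 := by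
  by_contra! h
  have hεa : εa = 0 := by simpa [hZ₀, hA₀, hlam] using h p₀ hB₀
  have hZ0 : Z ≠ 0 := by rintro rfl; exact hA (by simp [hεa])
  obtain ⟨p₁, hA₁, hB₁, hZ₁⟩ := hZ hZ0
  have ht : t = 0 := by simpa [hA₁, hZ₁] using h p₁ hB₁
  have hδa : δa = 0 := by
    simpa [hεa, ht, hA₀, hA₁, hZ₀, hZ₁, hlam] using h (p₁ + p₀) (by simp [hB₀, hB₁])
  exact hA (by simp [hεa, hδa])

theorem exists_eq_smul_add_smul_add_smul_of_apply_mul_apply_eq {Z A B C D : Module.Dual K V}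
    (hAZ : A ∉ span K {Z}) (hBAZ : B ∉ span K {A, Z}) {εa δa εb δb lam β t : K}
    (hA : εa • A + δa • Z ≠ 0) (hB : εb • B + δb • Z ≠ 0) (hlam : lam ≠ 0) (hβ : β ≠ 0)
    (hCD : ∀ p, C p * D p = t * Z p ^ 2 - lam * (A p * (εa * A p + δa * Z p))
      - β * (B p * (εb * B p + δb * Z p))) :
    ∃ μ η ε : K, μ ≠ 0 ∧ η ≠ 0 ∧ (C = μ • A + η • B + ε • Z ∨ D = μ • A + η • B + ε • Z) := by
  have hABZ : A ∉ span K {Z, B} := Set.pair_comm B Z ▸ notMem_span_pair_exchange hAZ hBAZ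
  obtain ⟨pa, hZa, hBa, hAa⟩ := exists_apply_eq_one_of_notMem_span_pair hABZ
  obtain ⟨pb, hAb, hZb, hBb⟩ := exists_apply_eq_one_of_notMem_span_pair hBAZ
  have hz : Z ≠ 0 → ∃ p, A p = 0 ∧ B p = 0 ∧ Z p = 1 := fun hZ ↦
    exists_apply_eq_one_of_notMem_span_pair (notMem_span_pair_of_ne_zero hZ hAZ hBAZ)
  have hz' : Z ≠ 0 → ∃ p, B p = 0 ∧ A p = 0 ∧ Z p = 1 := fun hZ ↦
    (hz hZ).imp fun _ h ↦ ⟨h.2.1, h.1, h.2.2⟩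
  have hCD_ne : ∃ p, C p * D p ≠ 0 := by
    obtain ⟨p, hBp, hp⟩ := exists_apply_eq_zero_quadratic_ne_zero hA hlam hZa hBa hAa hz t
    exact ⟨p, by simpa [hCD, hBp] using hp⟩
  have hker : ∀ p, A p = 0 → B p = 0 → Z p = 0 → C p = 0 ∧ D p = 0 := by
    intro p hAp hBp hZp
    have hpp : C p * D p = 0 := by simp [hCD, hAp, hBp, hZp]
    refine apply_eq_zero_and_apply_eq_zero_of_polar (f := C) (g := D) hpp (fun q ↦ ?_) hCD_ne
    have hpq := hCD (p + q)
    simp only [map_add, hAp, hBp, hZp, zero_add] at hpq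
    linear_combination hpq - hCD q - hpp
  obtain ⟨ca, cb, cz, rfl⟩ := exists_eq_smul_add_smul_add_smul fun p hAp hBp hZp ↦
    (hker p hAp hBp hZp).1
  obtain ⟨da, db, dz, rfl⟩ := exists_eq_smul_add_smul_add_smul fun p hAp hBp hZp ↦
    (hker p hAp hBp hZp).2
  simp only [LinearMap.add_apply, LinearMap.smul_apply, smul_eq_mul] at hCD
  have hab : ca * db + cb * da = 0 := by
    have ha := hCD pa
    have hb := hCD pb
    have hab := hCD (pa + pb)
    simp only [map_add, hZa, hBa, hAa, hAb, hZb, hBb] at ha hb hab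
    linear_combination hab - ha - hb
  have hca : ca ≠ 0 ∨ da ≠ 0 := by
    by_contra! h0
    obtain ⟨p, hBp, hp⟩ :=
      exists_apply_eq_zero_quadratic_ne_zero hA hlam hZa hBa hAa hz (t - cz * dz)
    -- with `ca = da = 0`, on `ker B` the product `C * D` is `cz * dz * Z ^ 2`
    have h := hCD p
    rw [h0.1, h0.2, hBp] at h
    exact hp (by linear_combination -h)
  have hcb : cb ≠ 0 ∨ db ≠ 0 := by
    by_contra! h0
    obtain ⟨p, hAp, hp⟩ :=
      exists_apply_eq_zero_quadratic_ne_zero hB hβ hZb hAb hBb hz' (t - cz * dz)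
    have h := hCD p
    rw [h0.1, h0.2, hAp] at h
    exact hp (by linear_combination -h)
  rcases ne_zero_and_ne_zero_of_mul_add_mul_eq_zero hca hcb hab with h | h
  · exact ⟨ca, cb, cz, h.1, h.2, Or.inl rfl⟩
  · exact ⟨da, db, dz, h.1, h.2, Or.inr rfl⟩

end Module.Dual

namespace MvPolynomial

variable {σ K : Type*} [Fintype σ] [Field K]

def linearFunctional : MvPolynomial σ K →ₗ[K] Module.Dual K (σ → K) where
  toFun l := ∑ i, coeff (Finsupp.single i 1) l • LinearMap.proj i
  map_add' l l' := by simp [add_smul, Finset.sum_add_distrib]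
  map_smul' s l := by simp [smul_smul, Finset.smul_sum]

theorem IsHomogeneous.eval_eq_linearFunctional {l : MvPolynomial σ K} (hl : l.IsHomogeneous 1)
    (p : σ → K) : eval p l = linearFunctional l p := by
  rw [← mem_homogeneousSubmodule, homogeneousSubmodule_one_eq_span_X] at hl
  induction hl using Submodule.span_induction with
  | mem x hx =>
    obtain ⟨i, rfl⟩ := hx
    classical
    simp [linearFunctional, coeff_X, Finsupp.single_left_inj one_ne_zero]
  | zero => simp
  | add x y _ _ hx hy => simp [hx, hy]
  | smul s x _ hx => simp [hx]

variable [Infinite K]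

theorem linearFunctional_injOn :
    Set.InjOn (linearFunctional (σ := σ) (K := K)) (homogeneousSubmodule σ K 1) :=
  fun l hl l' hl' h ↦ funext fun p ↦ by
    rw [IsHomogeneous.eval_eq_linearFunctional hl, IsHomogeneous.eval_eq_linearFunctional hl', h]

theorem linearFunctional_ne_zero {l : MvPolynomial σ K} (hl : l ∈ homogeneousSubmodule σ K 1)
    (h : l ≠ 0) : linearFunctional l ≠ 0 := fun h' ↦
  h (linearFunctional_injOn hl (zero_mem _) (h'.trans (map_zero _).symm))

theorem linearFunctional_mem_span_image_iff {S : Set (MvPolynomial σ K)}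
    (hS : S ⊆ homogeneousSubmodule σ K 1) {l : MvPolynomial σ K}
    (hl : l ∈ homogeneousSubmodule σ K 1) :
    linearFunctional l ∈ span K (linearFunctional '' S) ↔ l ∈ span K S := by
  rw [span_image, mem_map]
  refine ⟨fun ⟨x, hx, hxl⟩ ↦ ?_, fun h ↦ ⟨l, h, rfl⟩⟩
  rwa [← linearFunctional_injOn (span_le.2 hS hx) hl hxl]

end MvPolynomial

/-- Claim `c,d,V`: if `z, a, b` are linear forms with `a ∉ span{z}`,
`b ∉ span{a,z}`, and `λ·a·(εₐa + δₐz) + β·b·(ε_b b + δ_b z) + c·d ∈ span{z²}` with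
`λ, β ≠ 0`, then `c` or `d` equals `μa + ηb + εz` with `μ, η ≠ 0`. -/
theorem cd_in_span (n : ℕ) (z a b : MvPolynomial (Fin n) ℂ)
    (hz : IsLinearForm z) (ha : IsLinearForm a) (hb : IsLinearForm b)
    (haz : a ∉ Submodule.span ℂ ({z} : Set (MvPolynomial (Fin n) ℂ)))
    (hbaz : b ∉ Submodule.span ℂ ({a, z} : Set (MvPolynomial (Fin n) ℂ)))
    (εa δa εb δb : ℂ)
    (hA : εa • a + δa • z ≠ 0) (hB : εb • b + δb • z ≠ 0)
    (lam β : ℂ) (hlam : lam ≠ 0) (hβ : β ≠ 0)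
    (c d : MvPolynomial (Fin n) ℂ) (hc : IsLinearForm c) (hd : IsLinearForm d)
    (hmem : lam • (a * (εa • a + δa • z)) + β • (b * (εb • b + δb • z)) + c * d
      ∈ Submodule.span ℂ ({z ^ 2} : Set (MvPolynomial (Fin n) ℂ))) :
    ∃ μ η ε : ℂ, μ ≠ 0 ∧ η ≠ 0 ∧
      (c = μ • a + η • b + ε • z ∨ d = μ • a + η • b + ε • z) := by
  obtain ⟨t, ht⟩ := Submodule.mem_span_singleton.1 hmem
  set φ : MvPolynomial (Fin n) ℂ →ₗ[ℂ] Module.Dual ℂ (Fin n → ℂ) := linearFunctional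
  have hCD : ∀ p, φ c p * φ d p = t * φ z p ^ 2 - lam * (φ a p * (εa * φ a p + δa * φ z p))
      - β * (φ b p * (εb * φ b p + δb * φ z p)) := by
    intro p
    have h := congrArg (eval p) ht
    simp only [smul_eval, map_add, map_mul, map_pow, IsHomogeneous.eval_eq_linearFunctional hz,
      IsHomogeneous.eval_eq_linearFunctional ha, IsHomogeneous.eval_eq_linearFunctional hb,
      IsHomogeneous.eval_eq_linearFunctional hc, IsHomogeneous.eval_eq_linearFunctional hd] at h
    linear_combination -h
  have hAZ : φ a ∉ span ℂ {φ z} := by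
    rwa [← Set.image_singleton, linearFunctional_mem_span_image_iff
      (Set.singleton_subset_iff.2 hz) ha]
  have hBAZ : φ b ∉ span ℂ {φ a, φ z} := by
    rwa [← Set.image_pair, linearFunctional_mem_span_image_iff
      (Set.insert_subset_iff.2 ⟨ha, Set.singleton_subset_iff.2 hz⟩) hb]
  have hA' : εa • φ a + δa • φ z ≠ 0 := by
    simpa using linearFunctional_ne_zero (add_mem (smul_mem _ εa ha) (smul_mem _ δa hz)) hA
  have hB' : εb • φ b + δb • φ z ≠ 0 := by
    simpa using linearFunctional_ne_zero (add_mem (smul_mem _ εb hb) (smul_mem _ δb hz)) hB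
  obtain ⟨μ, η, ε, hμ, hη, h⟩ :=
    Module.Dual.exists_eq_smul_add_smul_add_smul_of_apply_mul_apply_eq hAZ hBAZ hA' hB' hlam hβ hCD
  have hcomb : μ • a + η • b + ε • z ∈ homogeneousSubmodule (Fin n) ℂ 1 :=
    add_mem (add_mem (smul_mem _ μ ha) (smul_mem _ η hb)) (smul_mem _ ε hz)
  exact ⟨μ, η, ε, hμ, hη, h.imp (fun h ↦ linearFunctional_injOn hc hcomb (by simp [h, φ]))
    (fun h ↦ linearFunctional_injOn hd hcomb (by simp [h, φ]))⟩
end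
end

section
/- Let Q₀ be an irreducible homogeneous quadratic polynomial in ℂ[x₁,...,xₙ], let a, b be linear forms such that the polynomial C := Q₀ + a·b satisfies rank_s(C) = 2, and let L be a homogeneous quadratic polynomial with rank_s(L) = 2. If there exist linear forms c, d such that C ∈ ⟨c, d⟩ and L ∈ ⟨c, d⟩, then either both a, b ∈ MS(Q₀) + MS(L), or Q₀ ∈ ⟨c, d⟩. -/
open MvPolynomial

noncomputable section

/-!
Suppose `a ∉ V := MS Q₀ + MS L` (the case of `b` is symmetric) and write `Q₀ + a b = c u + d v`
and `L = c u' + d v'` with linear `u, v, u', v'`. Since `rank_s L = 2`, the latter is a minimal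
representation, so `c, d ∈ MS L ⊆ V`. Choose a linear functional `φ` vanishing on `V` with
`φ a = 1` and differentiate in the direction of `φ`: the derivative of `Q₀` vanishes because
`MS Q₀ ⊆ V`, which leaves `b + φ(b) a = φ(u) c + φ(v) d`. Applying `φ` gives `2 φ(b) = 0`,
so `b ∈ span {c, d}` and `Q₀ = c u + d v - a b ∈ ⟨c, d⟩`.
-/

lemma Submodule.exists_dual_eq_one_of_notMem {K V : Type*} [Field K] [AddCommGroup V]
    [Module K V] {W : Submodule K V} {x : V} (hx : x ∉ W) :
    ∃ φ : Module.Dual K V, φ x = 1 ∧ W ≤ LinearMap.ker φ := by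
  obtain ⟨f, hfx, hfW⟩ := W.exists_dual_map_eq_bot_of_notMem hx inferInstance
  refine ⟨(f x)⁻¹ • f, inv_mul_cancel₀ hfx, fun y hy => ?_⟩
  have hy0 : f y = 0 := LinearMap.le_ker_iff_map.mpr hfW hy
  simp [hy0]

section Homogeneous

variable {σ R : Type*} [CommRing R]

attribute [local instance] MvPolynomial.gradedAlgebra

lemma MvPolynomial.IsHomogeneous.homogeneousComponent_mul {c : MvPolynomial σ R} {i n : ℕ}
    (hc : c.IsHomogeneous i) (h : i ≤ n) (f : MvPolynomial σ R) :
    homogeneousComponent n (c * f) = c * homogeneousComponent (n - i) f := by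
  have := DirectSum.coe_decompose_mul_of_left_mem_of_le (homogeneousSubmodule σ R) (b := f)
    ((mem_homogeneousSubmodule i c).mpr hc) h
  rw [← decomposition.decompose'_apply, ← decomposition.decompose'_apply]
  exact this

lemma exists_isHomogeneous_one_of_mem_span_pair {P c d : MvPolynomial σ R}
    (hP : P.IsHomogeneous 2) (hc : c.IsHomogeneous 1) (hd : d.IsHomogeneous 1)
    (h : P ∈ Ideal.span {c, d}) :
    ∃ u v, u.IsHomogeneous 1 ∧ v.IsHomogeneous 1 ∧ P = c * u + d * v := by
  obtain ⟨f, g, rfl⟩ := Ideal.mem_span_pair.mp h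
  refine ⟨_, _, homogeneousComponent_isHomogeneous 1 f,
    homogeneousComponent_isHomogeneous 1 g, ?_⟩
  rw [← homogeneousComponent_eq_self hP, map_add, mul_comm f, mul_comm g,
    hc.homogeneousComponent_mul one_le_two, hd.homogeneousComponent_mul one_le_two]
  rfl

end Homogeneous

section DirDeriv

variable {σ R : Type*} [CommRing R]

def dirDeriv (φ : MvPolynomial σ R →ₗ[R] R) :
    Derivation R (MvPolynomial σ R) (MvPolynomial σ R) :=
  mkDerivation R fun i => C (φ (X i))

variable (φ : MvPolynomial σ R →ₗ[R] R)

lemma dirDeriv_of_isHomogeneous_one {l : MvPolynomial σ R} (hl : l.IsHomogeneous 1) :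
    dirDeriv φ l = C (φ l) := by
  have hspan : l ∈ Submodule.span R (Set.range X) := by
    rw [← homogeneousSubmodule_one_eq_span_X]
    exact hl
  refine LinearMap.eqOn_span (f := (dirDeriv φ).toLinearMap)
    (g := (Algebra.linearMap R (MvPolynomial σ R)).comp φ) ?_ hspan
  rintro _ ⟨i, rfl⟩
  simp [dirDeriv, mkDerivation_X, algebraMap_eq]

lemma dirDeriv_mul_of_isHomogeneous_one {l m : MvPolynomial σ R} (hl : l.IsHomogeneous 1)
    (hm : m.IsHomogeneous 1) : dirDeriv φ (l * m) = φ m • l + φ l • m := by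
  rw [Derivation.leibniz, dirDeriv_of_isHomogeneous_one φ hl, dirDeriv_of_isHomogeneous_one φ hm,
    smul_eq_mul, smul_eq_mul, smul_eq_C_mul, smul_eq_C_mul, mul_comm l, mul_comm m, add_comm]

end DirDeriv

lemma mem_span_pair_of_dirDeriv_eq_zero {σ K : Type*} [Field K] [CharZero K]
    (φ : MvPolynomial σ K →ₗ[K] K) {Q a b c d u v : MvPolynomial σ K}
    (ha : a.IsHomogeneous 1) (hb : b.IsHomogeneous 1) (hc : c.IsHomogeneous 1)
    (hd : d.IsHomogeneous 1) (hu : u.IsHomogeneous 1) (hv : v.IsHomogeneous 1)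
    (hE : Q + a * b = c * u + d * v) (hQ : dirDeriv φ Q = 0)
    (hφc : φ c = 0) (hφd : φ d = 0) (hφa : φ a = 1) : Q ∈ Ideal.span {c, d} := by
  have hDE := congrArg (dirDeriv φ) hE
  rw [map_add, map_add, hQ, zero_add, dirDeriv_mul_of_isHomogeneous_one φ ha hb,
    dirDeriv_mul_of_isHomogeneous_one φ hc hu, dirDeriv_mul_of_isHomogeneous_one φ hd hv,
    hφa, hφc, hφd, one_smul, zero_smul, add_zero, zero_smul, add_zero] at hDE
  have hφb : φ b = 0 := by
    have h := congrArg φ hDE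
    simp only [map_add, map_smul, hφa, hφc, hφd, smul_eq_mul, mul_zero, mul_one,
      add_zero] at h
    linear_combination h / 2
  rw [hφb, zero_smul, zero_add, smul_eq_C_mul, smul_eq_C_mul] at hDE
  refine Ideal.mem_span_pair.mpr ⟨u - C (φ u) * a, v - C (φ v) * a, ?_⟩
  linear_combination a * hDE - hE

section Representations

variable {n : ℕ}

lemma isRep_mul {l m : MvPolynomial (Fin n) ℂ} (hl : IsLinearForm l) (hm : IsLinearForm m) :
    IsRep (l * m) 1 fun k => if k = 0 then l else m := by
  refine ⟨fun i _ => ?_, by simp⟩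
  dsimp only
  split_ifs
  exacts [hl, hm]

def appendRep (r : ℕ) (f g : ℕ → MvPolynomial (Fin n) ℂ) : ℕ → MvPolynomial (Fin n) ℂ :=
  fun k => if k < 2 * r then f k else g (k - 2 * r)

lemma IsRep.add {Q Q' : MvPolynomial (Fin n) ℂ} {r s : ℕ} {f g : ℕ → MvPolynomial (Fin n) ℂ}
    (hf : IsRep Q r f) (hg : IsRep Q' s g) : IsRep (Q + Q') (r + s) (appendRep r f g) := by
  refine ⟨fun i hi => ?_, ?_⟩
  · unfold appendRep
    split_ifs with h
    exacts [hf.1 i h, hg.1 (i - 2 * r) (by omega)]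
  · rw [hf.2, hg.2, Finset.sum_range_add]
    congr 1
    · refine Finset.sum_congr rfl fun k hk => ?_
      have hk : 2 * k + 1 < 2 * r := by rw [Finset.mem_range] at hk; omega
      simp [appendRep, hk, (by omega : 2 * k < 2 * r)]
    · refine Finset.sum_congr rfl fun k _ => ?_
      simp [appendRep, show ¬2 * (r + k) < 2 * r by omega, show ¬2 * (r + k) + 1 < 2 * r by omega,
        show 2 * (r + k) - 2 * r = 2 * k by omega, show 2 * (r + k) + 1 - 2 * r = 2 * k + 1 by omega]

lemma exists_isRep {Q : MvPolynomial (Fin n) ℂ} (hQ : Q.IsHomogeneous 2) :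
    ∃ r f, IsRep Q r f := by
  have hQ' : Q ∈ homogeneousSubmodule (Fin n) ℂ 1 * homogeneousSubmodule (Fin n) ℂ 1 := by
    rw [← pow_two, homogeneousSubmodule_one_pow]
    exact hQ
  refine Submodule.mul_induction_on hQ' (fun l hl m hm => ⟨1, _, isRep_mul hl hm⟩) ?_
  rintro x y ⟨r, f, hf⟩ ⟨s, g, hg⟩
  exact ⟨r + s, _, hf.add hg⟩

lemma exists_isRep_rankS {Q : MvPolynomial (Fin n) ℂ} (hQ : Q.IsHomogeneous 2) :
    ∃ f, IsRep Q (rankS Q) f :=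
  Nat.sInf_mem (exists_isRep hQ)

lemma mem_MS {Q : MvPolynomial (Fin n) ℂ} {f : ℕ → MvPolynomial (Fin n) ℂ}
    (hf : IsRep Q (rankS Q) f) {i : ℕ} (hi : i < 2 * rankS Q) : f i ∈ MS Q :=
  le_iSup₂ (f := fun g (_ : IsRep Q (rankS Q) g) => Submodule.span ℂ (g '' Set.Iio (2 * rankS Q)))
    f hf (Submodule.subset_span ⟨i, hi, rfl⟩)

lemma mem_MS_of_eq_mul_add_mul {L l₁ l₂ l₃ l₄ : MvPolynomial (Fin n) ℂ} (hL : rankS L = 2)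
    (h₁ : IsLinearForm l₁) (h₂ : IsLinearForm l₂) (h₃ : IsLinearForm l₃) (h₄ : IsLinearForm l₄)
    (h : L = l₁ * l₂ + l₃ * l₄) : l₁ ∈ MS L ∧ l₃ ∈ MS L := by
  have hrep : IsRep L (rankS L) (appendRep 1 (fun k => if k = 0 then l₁ else l₂)
      (fun k => if k = 0 then l₃ else l₄)) := by
    rw [hL, h]
    exact (isRep_mul h₁ h₂).add (isRep_mul h₃ h₄)
  exact ⟨by simpa [appendRep] using mem_MS hrep (i := 0) (by omega),
    by simpa [appendRep] using mem_MS hrep (i := 2) (by omega)⟩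

lemma dirDeriv_eq_zero_of_isRep (φ : MvPolynomial (Fin n) ℂ →ₗ[ℂ] ℂ)
    {Q : MvPolynomial (Fin n) ℂ} {r : ℕ} {f : ℕ → MvPolynomial (Fin n) ℂ} (hf : IsRep Q r f)
    (hφ : ∀ i < 2 * r, φ (f i) = 0) : dirDeriv φ Q = 0 := by
  rw [hf.2, map_sum]
  refine Finset.sum_eq_zero fun k hk => ?_
  have hk : 2 * k + 1 < 2 * r := by rw [Finset.mem_range] at hk; omega
  rw [dirDeriv_mul_of_isHomogeneous_one φ (hf.1 _ (by omega)) (hf.1 _ hk), hφ _ hk,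
    hφ _ (by omega), zero_smul, zero_smul, add_zero]

lemma mem_span_pair_of_notMem {Q a b c d u v : MvPolynomial (Fin n) ℂ} {r : ℕ}
    {f : ℕ → MvPolynomial (Fin n) ℂ} {V : Submodule ℂ (MvPolynomial (Fin n) ℂ)}
    (hf : IsRep Q r f) (hfV : ∀ i < 2 * r, f i ∈ V)
    (ha : IsLinearForm a) (hb : IsLinearForm b) (hc : IsLinearForm c) (hd : IsLinearForm d)
    (hu : IsLinearForm u) (hv : IsLinearForm v) (hcV : c ∈ V) (hdV : d ∈ V) (haV : a ∉ V)
    (hE : Q + a * b = c * u + d * v) : Q ∈ Ideal.span {c, d} := by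
  obtain ⟨φ, hφa, hVφ⟩ := Submodule.exists_dual_eq_one_of_notMem haV
  exact mem_span_pair_of_dirDeriv_eq_zero φ ha hb hc hd hu hv hE
    (dirDeriv_eq_zero_of_isRep φ hf fun i hi => hVφ (hfV i hi)) (hVφ hcV) (hVφ hdV) hφa

end Representations

theorem Q0_ab_L_ideal_general (n : ℕ) (Q₀ : MvPolynomial (Fin n) ℂ)
    (hQ₀2 : Q₀.IsHomogeneous 2)
    (a b : MvPolynomial (Fin n) ℂ) (ha : IsLinearForm a) (hb : IsLinearForm b)
    (L : MvPolynomial (Fin n) ℂ) (hL2 : L.IsHomogeneous 2) (hLr : rankS L = 2)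
    (c d : MvPolynomial (Fin n) ℂ) (hc : IsLinearForm c) (hd : IsLinearForm d)
    (hCm : Q₀ + a * b ∈ Ideal.span ({c, d} : Set (MvPolynomial (Fin n) ℂ)))
    (hLm : L ∈ Ideal.span ({c, d} : Set (MvPolynomial (Fin n) ℂ))) :
    (a ∈ MS Q₀ ⊔ MS L ∧ b ∈ MS Q₀ ⊔ MS L) ∨
      Q₀ ∈ Ideal.span ({c, d} : Set (MvPolynomial (Fin n) ℂ)) := by
  obtain ⟨u, v, hu, hv, hE⟩ :=
    exists_isHomogeneous_one_of_mem_span_pair (hQ₀2.add (ha.mul hb)) hc hd hCm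
  obtain ⟨u', v', hu', hv', hL⟩ := exists_isHomogeneous_one_of_mem_span_pair hL2 hc hd hLm
  obtain ⟨hcL, hdL⟩ := mem_MS_of_eq_mul_add_mul hLr hc hu' hd hv' hL
  obtain ⟨f, hf⟩ := exists_isRep_rankS hQ₀2
  have hfV : ∀ i < 2 * rankS Q₀, f i ∈ MS Q₀ ⊔ MS L :=
    fun i hi => Submodule.mem_sup_left (mem_MS hf hi)
  have hcV := Submodule.mem_sup_right (S := MS Q₀) hcL
  have hdV := Submodule.mem_sup_right (S := MS Q₀) hdL
  by_cases hab : a ∈ MS Q₀ ⊔ MS L ∧ b ∈ MS Q₀ ⊔ MS L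
  · exact Or.inl hab
  right
  rcases not_and_or.mp hab with haV | hbV
  · exact mem_span_pair_of_notMem hf hfV ha hb hc hd hu hv hcV hdV haV hE
  · exact mem_span_pair_of_notMem hf hfV hb ha hc hd hu hv hcV hdV hbV (by rw [mul_comm, hE])

/-- Claim `Q_0,L,2`: let `Q₀` be an irreducible homogeneous quadratic,
`a, b` linear forms with `rank_s(Q₀ + a·b) = 2`, and `L` a homogeneous quadratic with
`rank_s(L) = 2`. If both `Q₀ + a·b` and `L` lie in an ideal `⟨c, d⟩` generated by two
linear forms, then either `a, b ∈ MS(Q₀) + MS(L)` or `Q₀ ∈ ⟨c, d⟩`. -/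
theorem Q0_ab_L_ideal (n : ℕ) (Q₀ : MvPolynomial (Fin n) ℂ)
    (hQ₀ : Irreducible Q₀) (hQ₀2 : Q₀.IsHomogeneous 2)
    (a b : MvPolynomial (Fin n) ℂ) (ha : IsLinearForm a) (hb : IsLinearForm b)
    (hC : rankS (Q₀ + a * b) = 2)
    (L : MvPolynomial (Fin n) ℂ) (hL2 : L.IsHomogeneous 2) (hLr : rankS L = 2)
    (c d : MvPolynomial (Fin n) ℂ) (hc : IsLinearForm c) (hd : IsLinearForm d)
    (hCm : Q₀ + a * b ∈ Ideal.span ({c, d} : Set (MvPolynomial (Fin n) ℂ)))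
    (hLm : L ∈ Ideal.span ({c, d} : Set (MvPolynomial (Fin n) ℂ))) :
    (a ∈ MS Q₀ ⊔ MS L ∧ b ∈ MS Q₀ ⊔ MS L) ∨
      Q₀ ∈ Ideal.span ({c, d} : Set (MvPolynomial (Fin n) ℂ)) :=
  Q0_ab_L_ideal_general n Q₀ hQ₀2 a b ha hb L hL2 hLr c d hc hd hCm hLm
end
end
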